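/- For every nonnegative integer n, sum over k from 0 to n of binomial(n,k) * x * F_k'(x) equals sum over k from 1 to n of binomial(n,k-1) * F_k(x), where F_n is the geometric polynomial and F_k' its derivative. -/

import Mathlib

open Finset Polynomial

/-!
The geometric polynomials satisfy `F (n+1) = X * ((1 + X) * F n)'`, and their binomial transform
`A n = ∑ₖ (n choose k) F k` satisfies `X * A n = (1 + X) * F n - [n = 0]` (by induction, using
Pascal's rule and the recurrence). The right-hand side of the identity is
`∑_{k ≤ n} (n choose k) F (k+1) - F (n+1) = X * ((1 + X) * A n)' - X * (X * A n)' = X * (A n)'`,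
which is the left-hand side.
-/

/-- Stirling numbers of the second kind. -/
def S : ℕ → ℕ → ℕ
  | 0, 0 => 1
  | 0, _ + 1 => 0
  | _ + 1, 0 => 0
  | n + 1, k + 1 => (k + 1) * S n (k + 1) + S n k

/-- Geometric (Fubini) polynomials. -/
noncomputable def F (n : ℕ) : Polynomial ℤ :=
  ∑ k ∈ range (n + 1), Polynomial.C ((S n k : ℤ) * (Nat.factorial k : ℤ)) * Polynomial.X ^ k

theorem S_eq_zero_of_lt : ∀ {n k : ℕ}, n < k → S n k = 0
  | 0, _ + 1, _ => rfl
  | n + 1, k + 1, h => by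
    rw [S, S_eq_zero_of_lt (by omega : n < k + 1), S_eq_zero_of_lt (by omega : n < k), mul_zero]

theorem coeff_F (n k : ℕ) : (F n).coeff k = S n k * k.factorial := by
  simp only [F, finsetSum_coeff, coeff_C_mul_X_pow, sum_ite_eq, mem_range]
  split_ifs with h
  · rfl
  · rw [S_eq_zero_of_lt (by omega), Nat.cast_zero, zero_mul]

theorem F_succ (n : ℕ) : F (n + 1) = X * derivative ((1 + X) * F n) := by
  ext (_ | k)
  · simp [coeff_F, S]
  · rw [coeff_X_mul, coeff_derivative, add_mul, coeff_add, one_mul, coeff_X_mul, coeff_F,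
      coeff_F, coeff_F, S, Nat.factorial_succ]
    push_cast
    ring

noncomputable def binomialF (n : ℕ) : ℤ[X] :=
  ∑ k ∈ range (n + 1), (n.choose k : ℤ[X]) * F k

theorem sum_choose_mul_F_succ (n : ℕ) :
    ∑ k ∈ range (n + 1), (n.choose k : ℤ[X]) * F (k + 1) =
      X * derivative ((1 + X) * binomialF n) := by
  simp only [binomialF, mul_sum, derivative_sum, F_succ, derivative_mul, derivative_natCast]
  refine sum_congr rfl fun k _ => ?_
  ring

theorem binomialF_succ (n : ℕ) :
    binomialF (n + 1) = binomialF n + X * derivative ((1 + X) * binomialF n) := by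
  rw [← sum_choose_mul_F_succ]
  exact Finset.sum_choose_succ_mul (fun i _ => F i) n

theorem X_mul_binomialF (n : ℕ) :
    X * binomialF n = (1 + X) * F n - C (if n = 0 then 1 else 0) := by
  induction n with
  | zero => simp [binomialF, F, S]
  | succ n ih =>
    have hder : derivative ((1 + X) * F n) = derivative (X * binomialF n) := by
      rw [ih, derivative_sub, derivative_C, sub_zero]
    rw [binomialF_succ, F_succ, hder, if_neg n.succ_ne_zero, map_zero, sub_zero]
    simp only [derivative_mul, derivative_add, derivative_one, derivative_X]
    ring

theorem derivative_one_add_X_mul_F (n : ℕ) :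
    derivative ((1 + X) * F n) = derivative (X * binomialF n) := by
  rw [X_mul_binomialF, derivative_sub, derivative_C, sub_zero]

theorem stmt14 (n : ℕ) :
    ∑ k ∈ range (n + 1), Polynomial.C (n.choose k : ℤ) * Polynomial.X *
        Polynomial.derivative (F k) =
      ∑ k ∈ Icc 1 n, Polynomial.C (n.choose (k - 1) : ℤ) * F k := by
  have hL : ∑ k ∈ range (n + 1), C (n.choose k : ℤ) * X * derivative (F k) =
      X * derivative (binomialF n) := by
    simp only [binomialF, map_natCast, derivative_sum, derivative_natCast_mul, mul_sum]
    exact sum_congr rfl fun k _ => by ring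
  have hR : ∑ k ∈ Icc 1 n, C (n.choose (k - 1) : ℤ) * F k =
      ∑ k ∈ range (n + 1), (n.choose k : ℤ[X]) * F (k + 1) - F (n + 1) := by
    rw [sum_range_succ, Nat.choose_self, Nat.cast_one, one_mul, add_sub_cancel_right,
      ← Ico_add_one_right_eq_Icc, sum_Ico_eq_sum_range, add_tsub_cancel_right]
    refine sum_congr rfl fun k _ => ?_
    rw [map_natCast, add_tsub_cancel_left, add_comm 1 k]
  rw [hL, hR, sum_choose_mul_F_succ, F_succ, derivative_one_add_X_mul_F]
  simp only [derivative_mul, derivative_add, derivative_one, derivative_X]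
  ring
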